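/- Let M = U_{3,6} be the uniform matroid of rank 3 on E = {1,…,6}, whose nonempty proper flats are the singletons and the 2-element subsets of E, and let ℓ = x_{{1}} + x_{{2}} + 2x_{{1,2}} + x_{{1,4}} + x_{{2,5}} + x_{{1,6}} + x_{{2,6}} ∈ A^1(M). Then: (a) ℓ is combinatorially nef, i.e., ℓ satisfies property (P3); but (b) ℓ fails property (P2): for the flag consisting of the single flat {1,4}, there is no representation ℓ = ∑_F c_F x_F in A^1(M)_ℝ with c_{{1,4}} = 0 and c_F ≥ 0 for all nonempty proper flats F. -/

import Mathlib

open scoped Classical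
open MvPolynomial

namespace ChowPaper

variable {α : Type*}

/-- A matroid is loopless if every element of the ground set is independent as a singleton. -/
def Loopless (M : Matroid α) : Prop := ∀ a ∈ M.E, M.Indep ({a} : Set α)

/-- The (natural-number) rank of a set in a matroid: the supremum of the cardinalities of
independent subsets. -/
noncomputable def rkN (M : Matroid α) (X : Set α) : ℕ :=
  sSup {n : ℕ | ∃ I, M.Indep I ∧ I ⊆ X ∧ I.ncard = n}

/-- Nonempty proper flats of a matroid. -/
def PFlat (M : Matroid α) (F : Set α) : Prop := M.IsFlat F ∧ F.Nonempty ∧ F ≠ M.E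

/-- The index type of variables of the Chow ring: nonempty proper flats. -/
def FlatIdx (M : Matroid α) := {F : Set α // PFlat M F}

variable (R : Type*) [CommRing R]

/-- The polynomial ring `R[x_F : F a nonempty proper flat]`. -/
abbrev Pre (M : Matroid α) := MvPolynomial (FlatIdx M) R

/-- The linear form `∑_{F ∋ i} x_F`. -/
noncomputable def alphaPre (M : Matroid α) (i : α) : Pre R M :=
  ∑ᶠ F : FlatIdx M, if i ∈ F.1 then X F else 0

/-- The linear form `∑_{F ∌ i} x_F`. -/
noncomputable def betaPre (M : Matroid α) (i : α) : Pre R M :=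
  ∑ᶠ F : FlatIdx M, if i ∉ F.1 then X F else 0

/-- The defining ideal of the Chow ring of a matroid:  generated by products `x_F x_G` for
incomparable flats, and the differences `(∑_{F ∋ i} x_F) - (∑_{F ∋ j} x_F)` for `i j` in the
ground set. -/
noncomputable def chowIdeal (M : Matroid α) : Ideal (Pre R M) :=
  Ideal.span ({p | ∃ F G : FlatIdx M, ¬ F.1 ⊆ G.1 ∧ ¬ G.1 ⊆ F.1 ∧ p = X F * X G} ∪
    {p | ∃ i ∈ M.E, ∃ j ∈ M.E, p = alphaPre R M i - alphaPre R M j})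

/-- The Chow ring of a matroid. -/
abbrev Chow (M : Matroid α) := Pre R M ⧸ chowIdeal R M

/-- The quotient map onto the Chow ring. -/
noncomputable def cmk (M : Matroid α) : Pre R M →+* Chow R M :=
  Ideal.Quotient.mk (chowIdeal R M)

/-- The class `x_F` of a nonempty proper flat in the Chow ring. -/
noncomputable def xcls (M : Matroid α) (F : FlatIdx M) : Chow R M := cmk R M (X F)

/-- The class `x_F` for any set, with the convention that `x_F = 1` when `F` is not a nonempty
proper flat (in particular `x_∅ = x_E = 1`). -/
noncomputable def xv (M : Matroid α) (F : Set α) : Chow R M :=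
  if h : PFlat M F then xcls R M ⟨F, h⟩ else 1

/-- The class `α = ∑_{F ∋ i} x_F` in the Chow ring. -/
noncomputable def alpha (M : Matroid α) (i : α) : Chow R M := cmk R M (alphaPre R M i)

/-- The class `β = ∑_{F ∌ i} x_F` in the Chow ring. -/
noncomputable def beta (M : Matroid α) (i : α) : Chow R M := cmk R M (betaPre R M i)

/-- The class `α_S = α - ∑_{S ⊆ F} x_F`. -/
noncomputable def alphaS (M : Matroid α) (i : α) (S : Set α) : Chow R M :=
  alpha R M i - cmk R M (∑ᶠ F : FlatIdx M, if S ⊆ F.1 then X F else 0)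

/-- The class `β_S = β - ∑_{F ⊆ E \ S} x_F`. -/
noncomputable def betaS (M : Matroid α) (i : α) (S : Set α) : Chow R M :=
  beta R M i - cmk R M (∑ᶠ F : FlatIdx M, if F.1 ⊆ M.E \ S then X F else 0)

/-- The sum of the classes of all flats of a given rank `n`. -/
noncomputable def flatsOfRank (M : Matroid α) (n : ℕ) : Chow R M :=
  cmk R M (∑ᶠ F : FlatIdx M, if rkN M F.1 = n then X F else 0)

/-- The degree-1 class with coefficients `c`, i.e. `∑_F c_F x_F`. -/
noncomputable def lin (M : Matroid α) (c : FlatIdx M → R) : Chow R M :=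
  cmk R M (∑ᶠ F : FlatIdx M, MvPolynomial.C (c F) * X F)

/-- `deg` is a degree map for a rank-`r` matroid if it is linear and sends the monomial of every
complete flag `F_1 ⊊ ⋯ ⊊ F_{r-1}` of nonempty proper flats to `1`.  (By Adiprasito–Huh–Katz such
a map exists and its values on the degree-`(r-1)` part of the Chow ring are uniquely
determined.) -/
def IsDegMap (M : Matroid α) (r : ℕ) (deg : Chow R M →ₗ[R] R) : Prop :=
  ∀ G : Fin (r - 1) → FlatIdx M, (StrictMono fun t => (G t).1) →
    deg (cmk R M (∏ t, X (G t))) = 1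

/-- A finite set of subsets is a flag of (nonempty proper) flats if all members are nonempty
proper flats and they are pairwise comparable. -/
def IsFlagF (M : Matroid α) (S : Finset (Set α)) : Prop :=
  (∀ F ∈ S, PFlat M F) ∧ ∀ F ∈ S, ∀ G ∈ S, F ⊆ G ∨ G ⊆ F

/-- A finite set of nonempty proper flats is a flag if its members are pairwise comparable. -/
def IsFlagIdx (M : Matroid α) (S : Finset (FlatIdx M)) : Prop :=
  ∀ F ∈ S, ∀ G ∈ S, F.1 ⊆ G.1 ∨ G.1 ⊆ F.1

/-- `N_I`: the number of flags of nonempty proper flats whose set of ranks is exactly `I`. -/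
noncomputable def Ncount (M : Matroid α) (I : Finset ℕ) : ℕ :=
  {S : Finset (Set α) | IsFlagF M S ∧ S.image (rkN M) = I}.ncard

/-- `N_{I,s}`: the number of flags of nonempty proper flats with rank set `I` none of whose
members contains `s` (equivalently, whose maximal member does not contain `s`). -/
noncomputable def NcountS (M : Matroid α) (I : Finset ℕ) (s : α) : ℕ :=
  {S : Finset (Set α) | IsFlagF M S ∧ S.image (rkN M) = I ∧ ∀ F ∈ S, s ∉ F}.ncard

/-- Combinatorial nefness (property (P3)): for every flag there is a representation with
coefficients vanishing on the flag and nonnegative on every flat that can be inserted into the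
flag. -/
def CombNef (M : Matroid α) (ℓ : Chow ℝ M) : Prop :=
  ∀ S : Finset (FlatIdx M), IsFlagIdx M S →
    ∃ c : FlatIdx M → ℝ, ℓ = lin ℝ M c ∧ (∀ F ∈ S, c F = 0) ∧
      ∀ F : FlatIdx M, F ∉ S → (∀ G ∈ S, F.1 ⊆ G.1 ∨ G.1 ⊆ F.1) → 0 ≤ c F

/-- Combinatorial ampleness: as nefness, with strictly positive coefficients on insertable
flats. -/
def CombAmple (M : Matroid α) (ℓ : Chow ℝ M) : Prop :=
  ∀ S : Finset (FlatIdx M), IsFlagIdx M S →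
    ∃ c : FlatIdx M → ℝ, ℓ = lin ℝ M c ∧ (∀ F ∈ S, c F = 0) ∧
      ∀ F : FlatIdx M, F ∉ S → (∀ G ∈ S, F.1 ⊆ G.1 ∨ G.1 ⊆ F.1) → 0 < c F

/-- Property (P2): for every flag there is a representation with coefficients vanishing on the
flag and nonnegative on all nonempty proper flats. -/
def P2 (M : Matroid α) (ℓ : Chow ℝ M) : Prop :=
  ∀ S : Finset (FlatIdx M), IsFlagIdx M S →
    ∃ c : FlatIdx M → ℝ, ℓ = lin ℝ M c ∧ (∀ F ∈ S, c F = 0) ∧ ∀ F : FlatIdx M, 0 ≤ c F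

/-- The fake effective cone: classes with nonnegative degree against every product of `r - 2`
combinatorially nef classes. -/
noncomputable def FakeEff (M : Matroid α) (r : ℕ) (deg : Chow ℝ M →ₗ[ℝ] ℝ) : Set (Chow ℝ M) :=
  {D | ∀ L : Fin (r - 2) → Chow ℝ M, (∀ t, CombNef M (L t)) → 0 ≤ deg (D * ∏ t, L t)}

/-- The matroid base polytope, as a subset of `α → ℝ`: the convex hull of the indicator
vectors of the bases. -/
noncomputable def polytope (M : Matroid α) : Set (α → ℝ) :=
  convexHull ℝ {x | ∃ B, M.IsBase B ∧ x = B.indicator 1}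

/-- The flag-counting function `N̂_{𝓕,I}` of Theorem 6.2: the number of flags of nonempty proper
flats with rank set `I`, disjoint from `𝓕` and forming a flag of flats together with `𝓕`,
provided every member of `𝓕` is a flat; and `0` otherwise. -/
noncomputable def Nhat (M : Matroid α) (Fl : Finset (Set α)) (I : Finset ℕ) : ℤ :=
  if ∀ F ∈ Fl, M.IsFlat F then
    ({G : Finset (Set α) | IsFlagF M G ∧ G.image (rkN M) = I ∧ Disjoint G Fl ∧
      IsFlagF M (G ∪ Fl)}).ncard
  else 0


set_option linter.unusedSectionVars false
set_option maxHeartbeats 1000000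

lemma sne {S T : Set ℕ} (x : ℕ) (h1 : x ∈ S) (h2 : x ∉ T) : S ≠ T := fun h => h2 (h ▸ h1)

/-- the ground set as a Finset -/
def E6 : Finset ℕ := {1, 2, 3, 4, 5, 6}

section aux
variable {M : Matroid ℕ} (hE : M.E = {1, 2, 3, 4, 5, 6})
  (hflats : ∀ F : Set ℕ, PFlat M F ↔ F ⊆ M.E ∧ (F.ncard = 1 ∨ F.ncard = 2))

include hE in
lemma hEfin : M.E.Finite := by
  rw [hE]
  exact (Set.finite_singleton 6).insert 5 |>.insert 4 |>.insert 3 |>.insert 2 |>.insert 1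

include hE hflats in
lemma flatidx_finite : Finite (FlatIdx M) := by
  have h : Finite {T : Set ℕ | T ⊆ M.E} := (hEfin hE).finite_subsets
  exact Finite.of_injective
    (fun F : FlatIdx M => (⟨F.1, ((hflats F.1).1 F.2).1⟩ : {T : Set ℕ | T ⊆ M.E}))
    (fun F G h => Subtype.ext (by simpa using congrArg Subtype.val h))

include hE hflats in
lemma classify (F : FlatIdx M) :
    (∃ a ∈ M.E, F.1 = {a}) ∨ (∃ a b, a ∈ M.E ∧ b ∈ M.E ∧ a < b ∧ F.1 = ({a, b} : Set ℕ)) := by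
  obtain ⟨hsub, hcard⟩ := (hflats F.1).1 F.2
  rcases hcard with h1 | h2
  · obtain ⟨a, ha⟩ := Set.ncard_eq_one.mp h1
    exact Or.inl ⟨a, hsub (ha ▸ rfl), ha⟩
  · obtain ⟨a, b, hab, hF⟩ := Set.ncard_eq_two.mp h2
    rcases lt_or_gt_of_ne hab with h | h
    · exact Or.inr ⟨a, b, hsub (hF ▸ Or.inl rfl), hsub (hF ▸ Or.inr rfl), h, hF⟩
    · exact Or.inr ⟨b, a, hsub (hF ▸ Or.inr rfl), hsub (hF ▸ Or.inl rfl), h,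
        hF.trans (Set.pair_comm a b)⟩

include hE in
lemma memE_cases {a : ℕ} (ha : a ∈ M.E) : a = 1 ∨ a = 2 ∨ a = 3 ∨ a = 4 ∨ a = 5 ∨ a = 6 := by
  rw [hE] at ha; simpa using ha

include hE in
lemma memE6 {a : ℕ} (ha : a ∈ M.E) : a ∈ E6 := by
  rcases memE_cases hE ha with rfl|rfl|rfl|rfl|rfl|rfl <;> decide

include hE hflats in
lemma pflat_single {a : ℕ} (ha : a ∈ M.E) : PFlat M {a} :=
  (hflats _).2 ⟨Set.singleton_subset_iff.mpr ha, Or.inl (Set.ncard_singleton a)⟩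

include hE hflats in
lemma pflat_pair {a b : ℕ} (ha : a ∈ M.E) (hb : b ∈ M.E) (hab : a ≠ b) : PFlat M ({a,b} : Set ℕ) := by
  refine (hflats _).2 ⟨?_, Or.inr (Set.ncard_pair hab)⟩
  intro x hx
  rcases hx with rfl | hx
  · exact ha
  · exact Set.mem_singleton_iff.mp hx ▸ hb

include hE hflats in
lemma flat_fin (F : FlatIdx M) : F.1.Finite := (hEfin hE).subset ((hflats F.1).1 F.2).1

include hE hflats in
lemma eq_of_subset_card (F G : FlatIdx M) (h : F.1 ⊆ G.1) (hc : G.1.ncard ≤ F.1.ncard) : F = G :=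
  Subtype.ext (Set.eq_of_subset_of_ncard_le h hc (flat_fin hE hflats G))

include hE hflats in
lemma flat_card_le (F : FlatIdx M) : F.1.ncard ≤ 2 := by
  rcases ((hflats F.1).1 F.2).2 with h | h <;> omega

-- sum helpers
lemma sumE_single (t : ℕ → ℝ) {a : ℕ} (ha : a ∈ E6) :
    (∑ i ∈ E6, @ite _ (i ∈ ({a} : Set ℕ)) (Classical.propDecidable _) (t i) 0) = t a := by
  simp only [Set.mem_singleton_iff]
  rw [Finset.sum_ite_eq' E6 a t, if_pos ha]

lemma sumE_pair (t : ℕ → ℝ) {a b : ℕ} (ha : a ∈ E6) (hb : b ∈ E6) (hab : a ≠ b) :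
    (∑ i ∈ E6, @ite _ (i ∈ ({a, b} : Set ℕ)) (Classical.propDecidable _) (t i) 0)
      = t a + t b := by
  have : ∀ i, (@ite _ (i ∈ ({a, b} : Set ℕ)) (Classical.propDecidable _) (t i) 0)
      = (if i = a then t i else 0) + (if i = b then t i else 0) := by
    intro i
    by_cases h1 : i = a
    · subst h1; simp [hab]
    · by_cases h2 : i = b
      · subst h2; simp [Set.mem_insert_iff, Ne.symm hab]
      · simp [h1, h2, Set.mem_insert_iff]
  rw [Finset.sum_congr rfl (fun i _ => this i), Finset.sum_add_distrib,
    Finset.sum_ite_eq' E6 a t, Finset.sum_ite_eq' E6 b t, if_pos ha, if_pos hb]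

end aux
section aux2
variable {M : Matroid ℕ} (hE : M.E = {1, 2, 3, 4, 5, 6})
  (hflats : ∀ F : Set ℕ, PFlat M F ↔ F ⊆ M.E ∧ (F.ncard = 1 ∨ F.ncard = 2))
  [Fintype (FlatIdx M)]

include hE in
lemma memE_of_E6 {a : ℕ} (ha : a ∈ E6) : a ∈ M.E := by
  fin_cases ha <;> rw [hE] <;> norm_num

lemma lin_eq_sum (c : FlatIdx M → ℝ) :
    lin ℝ M c = cmk ℝ M (∑ F : FlatIdx M, C (c F) * X F) := by
  rw [lin, finsum_eq_sum_of_fintype]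

lemma alphaPre_eq_sum (i : ℕ) :
    alphaPre ℝ M i = ∑ F : FlatIdx M, (if i ∈ F.1 then (X F : Pre ℝ M) else 0) :=
  finsum_eq_sum_of_fintype _

include hE in
lemma key_shift (c : FlatIdx M → ℝ) (t : ℕ → ℝ) (ht : ∑ i ∈ E6, t i = 0) :
    lin ℝ M (fun F => c F + ∑ i ∈ E6, if i ∈ F.1 then t i else 0) = lin ℝ M c := by
  rw [lin_eq_sum, lin_eq_sum]
  have expand : (∑ F : FlatIdx M, C (c F + ∑ i ∈ E6, if i ∈ F.1 then t i else 0) * X F)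
      = (∑ F : FlatIdx M, C (c F) * X F) + ∑ i ∈ E6, C (t i) * alphaPre ℝ M i := by
    rw [Finset.sum_congr rfl (fun F _ => by rw [map_add, add_mul]), Finset.sum_add_distrib]
    congr 1
    have step1 : ∀ F : FlatIdx M,
        (C (∑ i ∈ E6, if i ∈ F.1 then t i else 0) * X F : Pre ℝ M)
        = ∑ i ∈ E6, C (t i) * (if i ∈ F.1 then (X F : Pre ℝ M) else 0) := by
      intro F
      rw [map_sum, Finset.sum_mul]
      refine Finset.sum_congr rfl fun i _ => ?_
      split_ifs <;> simp
    rw [Finset.sum_congr rfl (fun F _ => step1 F), Finset.sum_comm]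
    refine Finset.sum_congr rfl fun i _ => ?_
    rw [alphaPre_eq_sum, Finset.mul_sum]
  rw [expand, map_add]
  have hmem : (∑ i ∈ E6, C (t i) * alphaPre ℝ M i) ∈ chowIdeal ℝ M := by
    have h0 : (∑ i ∈ E6, C (t i) * alphaPre ℝ M (1:ℕ) : Pre ℝ M) = 0 := by
      rw [← Finset.sum_mul, ← map_sum, ht, map_zero, zero_mul]
    have hP : (∑ i ∈ E6, C (t i) * alphaPre ℝ M i)
        = ∑ i ∈ E6, C (t i) * (alphaPre ℝ M i - alphaPre ℝ M 1) := by
      simp only [mul_sub, Finset.sum_sub_distrib, h0, sub_zero]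
    rw [hP]
    refine Ideal.sum_mem _ fun i hi => Ideal.mul_mem_left _ _ ?_
    exact Ideal.subset_span (Or.inr ⟨i, memE_of_E6 hE hi, 1, memE_of_E6 hE (by decide), rfl⟩)
  have : cmk ℝ M (∑ i ∈ E6, C (t i) * alphaPre ℝ M i) = 0 :=
    Ideal.Quotient.eq_zero_iff_mem.mpr hmem
  rw [this, add_zero]

end aux2
/-- coefficients of ℓ -/
noncomputable def lc (M : Matroid ℕ) (F : FlatIdx M) : ℝ :=
  (if 1 ∈ F.1 then (if 2 ∈ F.1 then 2 else if 3 ∈ F.1 then 0 else if 5 ∈ F.1 then 0 else 1) else 0)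
  + (if 2 ∈ F.1 then (if 1 ∈ F.1 then 0 else if 3 ∈ F.1 then 0 else if 4 ∈ F.1 then 0 else 1)
      else 0)

lemma lc_nonneg (M : Matroid ℕ) (F : FlatIdx M) : 0 ≤ lc M F := by
  unfold lc; split_ifs <;> norm_num

/-- dual certificate coefficients -/
noncomputable def vc (M : Matroid ℕ) (F : FlatIdx M) : ℝ :=
  if 1 ∈ F.1 then (if 3 ∈ F.1 then 1 else if 5 ∈ F.1 then 1 else if 4 ∈ F.1 then -1 else 0)
  else if 4 ∈ F.1 then
    (if 2 ∈ F.1 then 1 else if 3 ∈ F.1 then 0 else if 5 ∈ F.1 then 0 else if 6 ∈ F.1 then 0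
      else 1)
  else if 6 ∈ F.1 then
    (if 2 ∈ F.1 then 0 else if 3 ∈ F.1 then 0 else if 5 ∈ F.1 then 0 else 1)
  else 0

section aux3
variable {M : Matroid ℕ} (hE : M.E = {1, 2, 3, 4, 5, 6})
  (hflats : ∀ F : Set ℕ, PFlat M F ↔ F ⊆ M.E ∧ (F.ncard = 1 ∨ F.ncard = 2))
  [Fintype (FlatIdx M)]

include hE hflats in
lemma vc_nonneg_of_ne (F : FlatIdx M) (h14 : F.1 ≠ {1, 4}) : 0 ≤ vc M F := by
  unfold vc
  split_ifs with h1 h3 h5 h4 <;> try norm_num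
  -- the -1 branch: 1 ∈ F.1, ¬3, ¬5, 4 ∈ F.1
  exfalso
  apply h14
  symm
  refine Set.eq_of_subset_of_ncard_le ?_ ?_ (flat_fin hE hflats F)
  · intro x hx; rcases hx with rfl | hx
    · exact h1
    · exact Set.mem_singleton_iff.mp hx ▸ h4
  · rw [Set.ncard_pair (by norm_num : (1:ℕ) ≠ 4)]
    exact flat_card_le hE hflats F

end aux3
lemma fsum_insert {ι γ : Type*} [AddCommMonoid γ] {a : ι} {s : Finset ι} (h : a ∉ s)
    (f : ι → γ) : ∑ x ∈ insert a s, f x = f a + ∑ x ∈ s, f x := Finset.sum_insert h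

lemma sne2 {S T : Set ℕ} (x : ℕ) (h1 : x ∉ S) (h2 : x ∈ T) : S ≠ T := fun h => h1 (h ▸ h2)

lemma flatidx_eq_iff {M : Matroid ℕ} {F : FlatIdx M} {T : Set ℕ} {h : PFlat M T} :
    F = (⟨T, h⟩ : FlatIdx M) ↔ F.1 = T :=
  ⟨fun h' => by rw [h'], fun h' => Subtype.ext (by exact h')⟩

lemma fne {M : Matroid ℕ} {S T : Set ℕ} {h1 : PFlat M S} {h2 : PFlat M T} (h : S ≠ T) :
    (⟨S, h1⟩ : FlatIdx M) ≠ ⟨T, h2⟩ := fun he => h (congrArg Subtype.val he)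

section aux4
variable {M : Matroid ℕ} (hE : M.E = {1, 2, 3, 4, 5, 6})
  (hflats : ∀ F : Set ℕ, PFlat M F ↔ F ⊆ M.E ∧ (F.ncard = 1 ∨ F.ncard = 2))
  [Fintype (FlatIdx M)]

include hE hflats in
lemma hlrep : lin ℝ M (lc M) = xv ℝ M {1} + xv ℝ M {2} + 2 • xv ℝ M {1, 2} + xv ℝ M {1, 4}
    + xv ℝ M {2, 5} + xv ℝ M {1, 6} + xv ℝ M {2, 6} := by
  have m1 : (1:ℕ) ∈ M.E := by rw [hE]; simp
  have m2 : (2:ℕ) ∈ M.E := by rw [hE]; simp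
  have m4 : (4:ℕ) ∈ M.E := by rw [hE]; simp
  have m5 : (5:ℕ) ∈ M.E := by rw [hE]; simp
  have m6 : (6:ℕ) ∈ M.E := by rw [hE]; simp
  have pf1 : PFlat M {1} := pflat_single hE hflats m1
  have pf2 : PFlat M {2} := pflat_single hE hflats m2
  have pf12 : PFlat M ({1,2} : Set ℕ) := pflat_pair hE hflats m1 m2 (by norm_num)
  have pf14 : PFlat M ({1,4} : Set ℕ) := pflat_pair hE hflats m1 m4 (by norm_num)
  have pf25 : PFlat M ({2,5} : Set ℕ) := pflat_pair hE hflats m2 m5 (by norm_num)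
  have pf16 : PFlat M ({1,6} : Set ℕ) := pflat_pair hE hflats m1 m6 (by norm_num)
  have pf26 : PFlat M ({2,6} : Set ℕ) := pflat_pair hE hflats m2 m6 (by norm_num)
  have hsupp : ∀ F : FlatIdx M, lc M F ≠ 0 →
      F ∈ ({⟨{1},pf1⟩, ⟨{2},pf2⟩, ⟨{1,2},pf12⟩, ⟨{1,4},pf14⟩, ⟨{2,5},pf25⟩, ⟨{1,6},pf16⟩,
        ⟨{2,6},pf26⟩} : Finset (FlatIdx M)) := by
    intro F hne
    rcases classify hE hflats F with ⟨a, ha, hFa⟩ | ⟨a, b, ha, hb, hab, hFab⟩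
    · rcases memE_cases hE ha with rfl|rfl|rfl|rfl|rfl|rfl <;>
        first
          | (exfalso; apply hne; norm_num [lc, hFa, Set.mem_singleton_iff]; done)
          | (unfold FlatIdx at *; simp [Finset.mem_insert, Finset.mem_singleton, flatidx_eq_iff, Subtype.ext_iff, hFa]; done)
    · rcases memE_cases hE ha with rfl|rfl|rfl|rfl|rfl|rfl <;>
        rcases memE_cases hE hb with rfl|rfl|rfl|rfl|rfl|rfl <;>
        first
          | (exfalso; omega)
          | (exfalso; apply hne;
              norm_num [lc, hFab, Set.mem_insert_iff, Set.mem_singleton_iff]; done)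
          | (unfold FlatIdx at *; simp [Finset.mem_insert, Finset.mem_singleton, flatidx_eq_iff, Subtype.ext_iff, hFab]; done)
  rw [lin_eq_sum]
  rw [← Finset.sum_subset (Finset.subset_univ
    ({⟨{1},pf1⟩, ⟨{2},pf2⟩, ⟨{1,2},pf12⟩, ⟨{1,4},pf14⟩, ⟨{2,5},pf25⟩, ⟨{1,6},pf16⟩,
        ⟨{2,6},pf26⟩} : Finset (FlatIdx M)))
    (fun F _ hF => by rw [not_imp_comm.mp (hsupp F) hF, map_zero, zero_mul])]
  have d1 : (⟨{1},pf1⟩ : FlatIdx M) ∉ ({⟨{2},pf2⟩, ⟨{1,2},pf12⟩, ⟨{1,4},pf14⟩, ⟨{2,5},pf25⟩,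
      ⟨{1,6},pf16⟩, ⟨{2,6},pf26⟩} : Finset (FlatIdx M)) := by
    unfold FlatIdx
    simp only [Finset.mem_insert, Finset.mem_singleton, not_or]
    exact ⟨fne (sne 1 (by simp) (by simp)), fne (sne2 2 (by simp) (by simp)),
      fne (sne2 4 (by simp) (by simp)), fne (sne2 2 (by simp) (by simp)),
      fne (sne2 6 (by simp) (by simp)), fne (sne2 2 (by simp) (by simp))⟩
  have d2 : (⟨{2},pf2⟩ : FlatIdx M) ∉ ({⟨{1,2},pf12⟩, ⟨{1,4},pf14⟩, ⟨{2,5},pf25⟩,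
      ⟨{1,6},pf16⟩, ⟨{2,6},pf26⟩} : Finset (FlatIdx M)) := by
    unfold FlatIdx
    simp only [Finset.mem_insert, Finset.mem_singleton, not_or]
    exact ⟨fne (sne2 1 (by simp) (by simp)), fne (sne 2 (by simp) (by simp)),
      fne (sne2 5 (by simp) (by simp)), fne (sne2 1 (by simp) (by simp)),
      fne (sne2 6 (by simp) (by simp))⟩
  have d3 : (⟨{1,2},pf12⟩ : FlatIdx M) ∉ ({⟨{1,4},pf14⟩, ⟨{2,5},pf25⟩,
      ⟨{1,6},pf16⟩, ⟨{2,6},pf26⟩} : Finset (FlatIdx M)) := by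
    unfold FlatIdx
    simp only [Finset.mem_insert, Finset.mem_singleton, not_or]
    exact ⟨fne (sne 2 (by simp) (by simp)), fne (sne 1 (by simp) (by simp)),
      fne (sne 2 (by simp) (by simp)), fne (sne 1 (by simp) (by simp))⟩
  have d4 : (⟨{1,4},pf14⟩ : FlatIdx M) ∉ ({⟨{2,5},pf25⟩, ⟨{1,6},pf16⟩,
      ⟨{2,6},pf26⟩} : Finset (FlatIdx M)) := by
    unfold FlatIdx
    simp only [Finset.mem_insert, Finset.mem_singleton, not_or]
    exact ⟨fne (sne 1 (by simp) (by simp)), fne (sne 4 (by simp) (by simp)),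
      fne (sne 4 (by simp) (by simp))⟩
  have d5 : (⟨{2,5},pf25⟩ : FlatIdx M) ∉ ({⟨{1,6},pf16⟩, ⟨{2,6},pf26⟩} : Finset (FlatIdx M)) := by
    unfold FlatIdx
    simp only [Finset.mem_insert, Finset.mem_singleton, not_or]
    exact ⟨fne (sne 2 (by simp) (by simp)), fne (sne 5 (by simp) (by simp))⟩
  have d6 : (⟨{1,6},pf16⟩ : FlatIdx M) ∉ ({⟨{2,6},pf26⟩} : Finset (FlatIdx M)) := by
    unfold FlatIdx
    simp only [Finset.mem_singleton]
    exact fne (sne 1 (by simp) (by simp))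
  rw [Finset.sum_insert (ι := FlatIdx M) d1, Finset.sum_insert (ι := FlatIdx M) d2, Finset.sum_insert (ι := FlatIdx M) d3, Finset.sum_insert (ι := FlatIdx M) d4,
    Finset.sum_insert (ι := FlatIdx M) d5, Finset.sum_insert (ι := FlatIdx M) d6,
    Finset.sum_singleton (ι := FlatIdx M) (a := ⟨{2,6},pf26⟩)]
  have e1 : lc M ⟨{1},pf1⟩ = 1 := by norm_num [lc]
  have e2 : lc M ⟨{2},pf2⟩ = 1 := by norm_num [lc]
  have e12 : lc M ⟨{1,2},pf12⟩ = 2 := by norm_num [lc, Set.mem_insert_iff]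
  have e14 : lc M ⟨{1,4},pf14⟩ = 1 := by norm_num [lc, Set.mem_insert_iff]
  have e25 : lc M ⟨{2,5},pf25⟩ = 1 := by norm_num [lc, Set.mem_insert_iff]
  have e16 : lc M ⟨{1,6},pf16⟩ = 1 := by norm_num [lc, Set.mem_insert_iff]
  have e26 : lc M ⟨{2,6},pf26⟩ = 1 := by norm_num [lc, Set.mem_insert_iff]
  rw [e1, e2, e12, e14, e25, e16, e26]
  have hx : ∀ (S : Set ℕ) (h : PFlat M S), xv ℝ M S = cmk ℝ M (X ⟨S, h⟩) := by
    intro S h; unfold xv xcls; rw [dif_pos h]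
  rw [hx {1} pf1, hx {2} pf2, hx _ pf12, hx _ pf14, hx _ pf25, hx _ pf16, hx _ pf26]
  rw [← map_nsmul, ← map_add, ← map_add, ← map_add, ← map_add, ← map_add, ← map_add]
  congr 1
  simp only [map_one, map_ofNat, one_mul]
  ring
end aux4
section aux5
variable {M : Matroid ℕ} (hE : M.E = {1, 2, 3, 4, 5, 6})
  (hflats : ∀ F : Set ℕ, PFlat M F ↔ F ⊆ M.E ∧ (F.ncard = 1 ∨ F.ncard = 2))
  [Fintype (FlatIdx M)]

include hE hflats in
lemma alpha_eval {i : ℕ} (hi : i ∈ M.E) :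
    ∑ F : FlatIdx M, (if i ∈ F.1 then vc M F else 0) = 1 := by
  have m1 : (1:ℕ) ∈ M.E := by rw [hE]; simp
  have m2 : (2:ℕ) ∈ M.E := by rw [hE]; simp
  have m3 : (3:ℕ) ∈ M.E := by rw [hE]; simp
  have m4 : (4:ℕ) ∈ M.E := by rw [hE]; simp
  have m5 : (5:ℕ) ∈ M.E := by rw [hE]; simp
  have m6 : (6:ℕ) ∈ M.E := by rw [hE]; simp
  have pf4 : PFlat M {4} := pflat_single hE hflats m4
  have pf6 : PFlat M {6} := pflat_single hE hflats m6
  have pf13 : PFlat M ({1,3} : Set ℕ) := pflat_pair hE hflats m1 m3 (by norm_num)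
  have pf15 : PFlat M ({1,5} : Set ℕ) := pflat_pair hE hflats m1 m5 (by norm_num)
  have pf24 : PFlat M ({2,4} : Set ℕ) := pflat_pair hE hflats m2 m4 (by norm_num)
  have pf14 : PFlat M ({1,4} : Set ℕ) := pflat_pair hE hflats m1 m4 (by norm_num)
  have hsupp : ∀ F : FlatIdx M, vc M F ≠ 0 →
      F ∈ ({⟨{4},pf4⟩, ⟨{6},pf6⟩, ⟨{1,3},pf13⟩, ⟨{1,5},pf15⟩, ⟨{2,4},pf24⟩,
        ⟨{1,4},pf14⟩} : Finset (FlatIdx M)) := by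
    intro F hne
    rcases classify hE hflats F with ⟨a, ha, hFa⟩ | ⟨a, b, ha, hb, hab, hFab⟩
    · rcases memE_cases hE ha with rfl|rfl|rfl|rfl|rfl|rfl <;>
        first
          | (exfalso; apply hne; norm_num [vc, hFa, Set.mem_singleton_iff]; done)
          | (unfold FlatIdx at *; simp [Finset.mem_insert, Finset.mem_singleton, flatidx_eq_iff, Subtype.ext_iff, hFa]; done)
    · rcases memE_cases hE ha with rfl|rfl|rfl|rfl|rfl|rfl <;>
        rcases memE_cases hE hb with rfl|rfl|rfl|rfl|rfl|rfl <;>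
        first
          | (exfalso; omega)
          | (exfalso; apply hne;
              norm_num [vc, hFab, Set.mem_insert_iff, Set.mem_singleton_iff]; done)
          | (unfold FlatIdx at *; simp [Finset.mem_insert, Finset.mem_singleton, flatidx_eq_iff, Subtype.ext_iff, hFab]; done)
  rw [← Finset.sum_subset (Finset.subset_univ
      ({⟨{4},pf4⟩, ⟨{6},pf6⟩, ⟨{1,3},pf13⟩, ⟨{1,5},pf15⟩, ⟨{2,4},pf24⟩,
        ⟨{1,4},pf14⟩} : Finset (FlatIdx M)))
    (fun F _ hF => by rw [not_imp_comm.mp (hsupp F) hF, ite_self])]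
  have d1 : (⟨{4},pf4⟩ : FlatIdx M) ∉ ({⟨{6},pf6⟩, ⟨{1,3},pf13⟩, ⟨{1,5},pf15⟩, ⟨{2,4},pf24⟩,
      ⟨{1,4},pf14⟩} : Finset (FlatIdx M)) := by
    unfold FlatIdx
    simp only [Finset.mem_insert, Finset.mem_singleton, not_or]
    exact ⟨fne (sne 4 (by simp) (by simp)), fne (sne2 1 (by simp) (by simp)),
      fne (sne2 1 (by simp) (by simp)), fne (sne2 2 (by simp) (by simp)),
      fne (sne2 1 (by simp) (by simp))⟩
  have d2 : (⟨{6},pf6⟩ : FlatIdx M) ∉ ({⟨{1,3},pf13⟩, ⟨{1,5},pf15⟩, ⟨{2,4},pf24⟩,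
      ⟨{1,4},pf14⟩} : Finset (FlatIdx M)) := by
    unfold FlatIdx
    simp only [Finset.mem_insert, Finset.mem_singleton, not_or]
    exact ⟨fne (sne 6 (by simp) (by simp)), fne (sne 6 (by simp) (by simp)),
      fne (sne 6 (by simp) (by simp)), fne (sne 6 (by simp) (by simp))⟩
  have d3 : (⟨{1,3},pf13⟩ : FlatIdx M) ∉ ({⟨{1,5},pf15⟩, ⟨{2,4},pf24⟩,
      ⟨{1,4},pf14⟩} : Finset (FlatIdx M)) := by
    unfold FlatIdx
    simp only [Finset.mem_insert, Finset.mem_singleton, not_or]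
    exact ⟨fne (sne 3 (by simp) (by simp)), fne (sne 3 (by simp) (by simp)),
      fne (sne 3 (by simp) (by simp))⟩
  have d4 : (⟨{1,5},pf15⟩ : FlatIdx M) ∉ ({⟨{2,4},pf24⟩, ⟨{1,4},pf14⟩} : Finset (FlatIdx M)) := by
    unfold FlatIdx
    simp only [Finset.mem_insert, Finset.mem_singleton, not_or]
    exact ⟨fne (sne 5 (by simp) (by simp)), fne (sne 5 (by simp) (by simp))⟩
  have d5 : (⟨{2,4},pf24⟩ : FlatIdx M) ∉ ({⟨{1,4},pf14⟩} : Finset (FlatIdx M)) := by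
    unfold FlatIdx
    simp only [Finset.mem_singleton]
    exact fne (sne 2 (by simp) (by simp))
  unfold FlatIdx at *
  simp only [Finset.sum_insert, Finset.sum_singleton, d1, d2, d3, d4, d5, not_false_iff,
    not_false_eq_true]
  rcases memE_cases hE hi with rfl|rfl|rfl|rfl|rfl|rfl <;>
    norm_num [vc, Set.mem_insert_iff, Set.mem_singleton_iff]
end aux5
set_option synthInstance.maxHeartbeats 400000

/-- evaluation algebra map to the dual numbers determined by `vc` -/
noncomputable def phi (M : Matroid ℕ) : Pre ℝ M →ₐ[ℝ] DualNumber ℝ :=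
  aeval (fun F => vc M F • DualNumber.eps)

section aux6
variable {M : Matroid ℕ} (hE : M.E = {1, 2, 3, 4, 5, 6})
  (hflats : ∀ F : Set ℕ, PFlat M F ↔ F ⊆ M.E ∧ (F.ncard = 1 ∨ F.ncard = 2))
  [Fintype (FlatIdx M)]

lemma xv_eq (S : Set ℕ) (h : PFlat M S) : xv ℝ M S = cmk ℝ M (X ⟨S, h⟩) := by
  unfold xv xcls; rw [dif_pos h]

include hE hflats in
lemma phi_alpha {i : ℕ} (hi : i ∈ M.E) : phi M (alphaPre ℝ M i) = DualNumber.eps := by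
  rw [alphaPre_eq_sum, map_sum]
  have step : ∀ F : FlatIdx M, phi M (if i ∈ F.1 then (X F : Pre ℝ M) else 0)
      = (if i ∈ F.1 then vc M F else 0) • DualNumber.eps := by
    intro F
    split_ifs
    · simp [phi, aeval_X]
    · simp
  rw [Finset.sum_congr rfl fun F _ => step F, ← Finset.sum_smul,
    alpha_eval hE hflats hi, one_smul]

include hE hflats in
lemma phi_vanish : ∀ p ∈ chowIdeal ℝ M, phi M p = 0 := by
  have hle : chowIdeal ℝ M ≤ RingHom.ker (phi M).toRingHom := by
    rw [chowIdeal, Ideal.span_le]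
    rintro q (⟨F, G, _, _, rfl⟩ | ⟨i, hi, j, hj, rfl⟩) <;> simp only [SetLike.mem_coe, RingHom.mem_ker]
    · show phi M (X F * X G) = 0
      rw [map_mul]
      have hF : phi M (X F) = vc M F • DualNumber.eps := by simp [phi, aeval_X]
      have hG : phi M (X G) = vc M G • DualNumber.eps := by simp [phi, aeval_X]
      rw [hF, hG, smul_mul_smul_comm, DualNumber.eps_mul_eps, smul_zero]
    · show phi M (alphaPre ℝ M i - alphaPre ℝ M j) = 0
      rw [map_sub, phi_alpha hE hflats hi, phi_alpha hE hflats hj, sub_self]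
  exact fun p hp => hle hp

include hE hflats in
lemma partb (c : FlatIdx M → ℝ) (h14 : ∀ F : FlatIdx M, F.1 = {1, 4} → c F = 0)
    (hpos : ∀ F : FlatIdx M, 0 ≤ c F) :
    xv ℝ M {1} + xv ℝ M {2} + 2 • xv ℝ M {1, 2} + xv ℝ M {1, 4} + xv ℝ M {2, 5}
      + xv ℝ M {1, 6} + xv ℝ M {2, 6} ≠ lin ℝ M c := by
  intro hc
  have m1 : (1:ℕ) ∈ M.E := by rw [hE]; simp
  have m2 : (2:ℕ) ∈ M.E := by rw [hE]; simp
  have m4 : (4:ℕ) ∈ M.E := by rw [hE]; simp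
  have m5 : (5:ℕ) ∈ M.E := by rw [hE]; simp
  have m6 : (6:ℕ) ∈ M.E := by rw [hE]; simp
  have pf1 : PFlat M {1} := pflat_single hE hflats m1
  have pf2 : PFlat M {2} := pflat_single hE hflats m2
  have pf12 : PFlat M ({1,2} : Set ℕ) := pflat_pair hE hflats m1 m2 (by norm_num)
  have pf14 : PFlat M ({1,4} : Set ℕ) := pflat_pair hE hflats m1 m4 (by norm_num)
  have pf25 : PFlat M ({2,5} : Set ℕ) := pflat_pair hE hflats m2 m5 (by norm_num)
  have pf16 : PFlat M ({1,6} : Set ℕ) := pflat_pair hE hflats m1 m6 (by norm_num)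
  have pf26 : PFlat M ({2,6} : Set ℕ) := pflat_pair hE hflats m2 m6 (by norm_num)
  set Φ : Chow ℝ M →+* DualNumber ℝ :=
    Ideal.Quotient.lift (chowIdeal ℝ M) (phi M).toRingHom (phi_vanish hE hflats) with hΦ
  have hcm : ∀ p : Pre ℝ M, Φ (cmk ℝ M p) = phi M p := fun p => by
    rw [hΦ, cmk]; exact Ideal.Quotient.lift_mk _ _ _
  have hxv : ∀ (S : Set ℕ) (h : PFlat M S), Φ (xv ℝ M S) = vc M ⟨S, h⟩ • DualNumber.eps := by
    intro S h
    rw [xv_eq S h, hcm]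
    simp [phi, aeval_X]
    exact aeval_X _ _
  have hv1 : vc M ⟨{1}, pf1⟩ = 0 := by norm_num [vc]
  have hv2 : vc M ⟨{2}, pf2⟩ = 0 := by norm_num [vc]
  have hv12 : vc M ⟨{1,2}, pf12⟩ = 0 := by norm_num [vc, Set.mem_insert_iff]
  have hv14 : vc M ⟨{1,4}, pf14⟩ = -1 := by norm_num [vc, Set.mem_insert_iff]
  have hv25 : vc M ⟨{2,5}, pf25⟩ = 0 := by norm_num [vc, Set.mem_insert_iff]
  have hv16 : vc M ⟨{1,6}, pf16⟩ = 0 := by norm_num [vc, Set.mem_insert_iff]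
  have hv26 : vc M ⟨{2,6}, pf26⟩ = 0 := by norm_num [vc, Set.mem_insert_iff]
  have hL : Φ (xv ℝ M {1} + xv ℝ M {2} + 2 • xv ℝ M {1, 2} + xv ℝ M {1, 4} + xv ℝ M {2, 5}
      + xv ℝ M {1, 6} + xv ℝ M {2, 6}) = -DualNumber.eps := by
    rw [map_add, map_add, map_add, map_add, map_add, map_add, map_nsmul,
      hxv {1} pf1, hxv {2} pf2, hxv _ pf12, hxv _ pf14, hxv _ pf25, hxv _ pf16, hxv _ pf26,
      hv1, hv2, hv12, hv14, hv25, hv16, hv26]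
    simp
  have hR : Φ (lin ℝ M c) = (∑ F : FlatIdx M, c F * vc M F) • DualNumber.eps := by
    rw [lin_eq_sum, hcm, map_sum]
    have step : ∀ F : FlatIdx M, phi M (C (c F) * X F)
        = (c F * vc M F) • DualNumber.eps := by
      intro F
      rw [map_mul]
      have h1 : phi M (C (c F)) = algebraMap ℝ (DualNumber ℝ) (c F) := by
        simp [phi, aeval_C]
      have h2 : phi M (X F) = vc M F • DualNumber.eps := by simp [phi, aeval_X]
      rw [h1, h2, ← Algebra.smul_def, smul_smul]
    rw [Finset.sum_congr rfl fun F _ => step F, ← Finset.sum_smul]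
  have hsnd : (-1 : ℝ) = ∑ F : FlatIdx M, c F * vc M F := by
    have he : (-DualNumber.eps : DualNumber ℝ)
        = (∑ F : FlatIdx M, c F * vc M F) • DualNumber.eps := by
      rw [← hL, hc, hR]
    simpa using congrArg TrivSqZeroExt.snd he
  have hnn : 0 ≤ ∑ F : FlatIdx M, c F * vc M F := by
    refine Finset.sum_nonneg fun F _ => ?_
    by_cases h : F.1 = {1, 4}
    · rw [h14 F h, zero_mul]
    · exact mul_nonneg (hpos F) (vc_nonneg_of_ne hE hflats F h)
  linarith [hsnd, hnn]
end aux6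
section aux7
variable {M : Matroid ℕ} (hE : M.E = {1, 2, 3, 4, 5, 6})
  (hflats : ∀ F : Set ℕ, PFlat M F ↔ F ⊆ M.E ∧ (F.ncard = 1 ∨ F.ncard = 2))
  [Fintype (FlatIdx M)]

lemma sumE6_expand (t : ℕ → ℝ) : ∑ i ∈ E6, t i = t 1 + t 2 + t 3 + t 4 + t 5 + t 6 := by
  show (∑ i ∈ ({1,2,3,4,5,6} : Finset ℕ), t i) = _
  rw [Finset.sum_insert (by decide), Finset.sum_insert (by decide),
    Finset.sum_insert (by decide), Finset.sum_insert (by decide),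
    Finset.sum_insert (by decide), Finset.sum_singleton]
  ring

lemma lc_congr {F G : FlatIdx M} (h : F.1 = G.1) : lc M F = lc M G := by
  unfold lc; rw [h]

include hE in
lemma shift_two {a b : ℕ} (ha : a ∈ M.E) (hb : b ∈ M.E) (hab : a ≠ b) (x y : ℝ) :
    ∃ t : ℕ → ℝ, (∑ i ∈ E6, t i = 0) ∧ t a = x ∧ t b = y := by
  refine ⟨fun i => (-(x+y)/4) + (if i = a then x - (-(x+y)/4) else 0)
    + (if i = b then y - (-(x+y)/4) else 0), ?_, ?_, ?_⟩
  · rw [Finset.sum_add_distrib, Finset.sum_add_distrib, Finset.sum_const,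
      Finset.sum_ite_eq' E6 a (fun _ => x - (-(x+y)/4)),
      Finset.sum_ite_eq' E6 b (fun _ => y - (-(x+y)/4)),
      if_pos (memE6 hE ha), if_pos (memE6 hE hb), nsmul_eq_mul,
      show E6.card = 6 from rfl]
    push_cast
    ring
  · simp [hab]
  · simp [Ne.symm hab]

include hE hflats in
lemma pair_ineq {a b : ℕ} (ha : a ∈ M.E) (hb : b ∈ M.E) (hab : a < b) (pfa : PFlat M {a})
    (pfb : PFlat M {b}) (pfab : PFlat M ({a,b} : Set ℕ)) :
    lc M ⟨{a,b},pfab⟩ ≤ lc M ⟨{a},pfa⟩ + lc M ⟨{b},pfb⟩ := by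
  rcases memE_cases hE ha with rfl|rfl|rfl|rfl|rfl|rfl <;>
    rcases memE_cases hE hb with rfl|rfl|rfl|rfl|rfl|rfl <;>
    first
      | (exfalso; omega)
      | (norm_num [lc, Set.mem_insert_iff, Set.mem_singleton_iff]; done)

include hE hflats in
lemma parta : CombNef M (lin ℝ M (lc M)) := by
  intro S hS
  by_cases h2 : ∃ F ∈ S, ∃ G ∈ S, F ≠ G
  · -- flag has two distinct members: it is a full flag {a} ⊂ {a,b}
    obtain ⟨F₀, hF₀S, G₀, hG₀S, hne⟩ := h2
    have hcmp := hS F₀ hF₀S G₀ hG₀S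
    have main : ∃ (a b : ℕ) (Fs Fl : FlatIdx M), a ∈ M.E ∧ b ∈ M.E ∧ a ≠ b ∧ Fs ∈ S ∧
        Fl ∈ S ∧ Fs.1 = {a} ∧ Fl.1 = ({a,b} : Set ℕ) := by
      rcases classify hE hflats F₀ with ⟨a0,ha0,h0⟩|⟨x0,y0,hx0,hy0,hxy0,h0⟩ <;>
        rcases classify hE hflats G₀ with ⟨a1,ha1,h1⟩|⟨x1,y1,hx1,hy1,hxy1,h1⟩
      · exfalso
        apply hne
        refine Subtype.ext ?_
        rcases hcmp with h|h
        · rw [h0, h1] at h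
          rw [h0, h1, Set.mem_singleton_iff.mp (h (Set.mem_singleton a0))]
        · rw [h0, h1] at h
          rw [h0, h1, Set.mem_singleton_iff.mp (h (Set.mem_singleton a1))]
      · -- F₀ singleton, G₀ pair
        have hsub : ({a0} : Set ℕ) ⊆ {x1, y1} := by
          rcases hcmp with h|h
          · rw [h0, h1] at h; exact h
          · exfalso
            rw [h0, h1] at h
            have e1 : x1 = a0 := Set.mem_singleton_iff.mp (h (Or.inl rfl))
            have e2 : y1 = a0 := Set.mem_singleton_iff.mp (h (Or.inr rfl))
            omega
        have := hsub (Set.mem_singleton a0)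
        rcases this with h|h
        · exact ⟨a0, y1, F₀, G₀, ha0, hy1, by omega, hF₀S, hG₀S, h0, by rw [h1, h]⟩
        · rw [Set.mem_singleton_iff] at h
          exact ⟨a0, x1, F₀, G₀, ha0, hx1, by omega, hF₀S, hG₀S, h0,
            by rw [h1, Set.pair_comm, h]⟩
      · -- F₀ pair, G₀ singleton
        have hsub : ({a1} : Set ℕ) ⊆ {x0, y0} := by
          rcases hcmp with h|h
          · exfalso
            rw [h0, h1] at h
            have e1 : x0 = a1 := Set.mem_singleton_iff.mp (h (Or.inl rfl))
            have e2 : y0 = a1 := Set.mem_singleton_iff.mp (h (Or.inr rfl))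
            omega
          · rw [h0, h1] at h; exact h
        have := hsub (Set.mem_singleton a1)
        rcases this with h|h
        · exact ⟨a1, y0, G₀, F₀, ha1, hy0, by omega, hG₀S, hF₀S, h1, by rw [h0, h]⟩
        · rw [Set.mem_singleton_iff] at h
          exact ⟨a1, x0, G₀, F₀, ha1, hx0, by omega, hG₀S, hF₀S, h1,
            by rw [h0, Set.pair_comm, h]⟩
      · exfalso
        apply hne
        have hc0 : F₀.1.ncard = 2 := by rw [h0]; exact Set.ncard_pair (by omega)
        have hc1 : G₀.1.ncard = 2 := by rw [h1]; exact Set.ncard_pair (by omega)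
        rcases hcmp with h|h
        · exact eq_of_subset_card hE hflats F₀ G₀ h (by omega)
        · exact (eq_of_subset_card hE hflats G₀ F₀ h (by omega)).symm
    obtain ⟨a, b, Fs, Fl, ha, hb, hab, hFsS, hFlS, hFs, hFl⟩ := main
    obtain ⟨t, ht, hta, htb⟩ := shift_two hE ha hb hab (-(lc M Fs)) (-(lc M Fl) + lc M Fs)
    have claim : ∀ H : FlatIdx M, (H.1 ⊆ Fs.1 ∨ Fs.1 ⊆ H.1) →
        (H.1 ⊆ Fl.1 ∨ Fl.1 ⊆ H.1) → H = Fs ∨ H = Fl := by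
      intro H hcS hcL
      rcases classify hE hflats H with ⟨p, hp, hHp⟩|⟨p,q,hp,hq,hpq,hHpq⟩
      · left
        have hpa : p = a := by
          rcases hcS with h|h
          · rw [hHp, hFs] at h
            exact Set.mem_singleton_iff.mp (h (Set.mem_singleton p))
          · rw [hHp, hFs] at h
            exact (Set.mem_singleton_iff.mp (h (Set.mem_singleton a))).symm
        exact Subtype.ext (by rw [hHp, hpa, hFs])
      · right
        have hH2 : H.1.ncard = 2 := by rw [hHpq]; exact Set.ncard_pair (by omega)
        have hL2 : Fl.1.ncard = 2 := by rw [hFl]; exact Set.ncard_pair hab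
        rcases hcL with h|h
        · exact eq_of_subset_card hE hflats H Fl h (by omega)
        · exact (eq_of_subset_card hE hflats Fl H h (by omega)).symm
    refine ⟨fun F => lc M F + ∑ i ∈ E6, if i ∈ F.1 then t i else 0,
      (key_shift hE (lc M) t ht).symm, ?_, ?_⟩
    · intro H hH
      rcases claim H (hS H hH Fs hFsS) (hS H hH Fl hFlS) with hHF|hHF <;> rw [hHF]
      · show lc M Fs + (∑ i ∈ E6, if i ∈ Fs.1 then t i else 0) = 0
        have e : (∑ i ∈ E6, if i ∈ Fs.1 then t i else 0) = t a := by
          rw [hFs]; exact sumE_single t (memE6 hE ha)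
        rw [e, hta]; ring
      · show lc M Fl + (∑ i ∈ E6, if i ∈ Fl.1 then t i else 0) = 0
        have e : (∑ i ∈ E6, if i ∈ Fl.1 then t i else 0) = t a + t b := by
          rw [hFl]; exact sumE_pair t (memE6 hE ha) (memE6 hE hb) hab
        rw [e, hta, htb]; ring
    · intro F hFS hcomp
      exfalso
      apply hFS
      rcases claim F (hcomp Fs hFsS) (hcomp Fl hFlS) with rfl|rfl <;> assumption
  · -- at most one member
    push_neg at h2
    by_cases hsupp : ∀ F ∈ S, lc M F = 0
    · exact ⟨lc M, rfl, hsupp, fun F _ _ => lc_nonneg M F⟩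
    · push_neg at hsupp
      obtain ⟨F₀, hF₀S, hF₀⟩ := hsupp
      have hall : ∀ H ∈ S, H = F₀ := fun H hH => h2 H hH F₀ hF₀S
      rcases classify hE hflats F₀ with ⟨a, ha, hFa⟩ | ⟨a, b, ha, hb, hab, hFab⟩
      · -- singleton flag {a}, lc ≠ 0 forces a = 1 or a = 2
        have ha12 : a = 1 ∨ a = 2 := by
          rcases memE_cases hE ha with rfl|rfl|rfl|rfl|rfl|rfl
          · exact Or.inl rfl
          · exact Or.inr rfl
          all_goals (exfalso; apply hF₀; norm_num [lc, hFa, Set.mem_singleton_iff])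
        rcases ha12 with rfl|rfl
        · -- a = 1
          set t : ℕ → ℝ := fun i => if i = 1 then -1 else if i = 2 then -1 else
            if i = 3 then 1 else if i = 5 then 1 else 0 with hts
          have ht : ∑ i ∈ E6, t i = 0 := by rw [sumE6_expand]; norm_num [hts]
          refine ⟨fun F => lc M F + ∑ i ∈ E6, if i ∈ F.1 then t i else 0,
            (key_shift hE (lc M) t ht).symm, ?_, ?_⟩
          · intro H hH
            rw [hall H hH]
            show lc M F₀ + (∑ i ∈ E6, if i ∈ F₀.1 then t i else 0) = 0
            have e : (∑ i ∈ E6, if i ∈ F₀.1 then t i else 0) = t 1 := by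
              rw [hFa]; exact sumE_single t (by decide)
            rw [e]
            norm_num [lc, hFa, hts]
          · intro F hFS hcomp
            have hc0 := hcomp F₀ hF₀S
            rcases classify hE hflats F with ⟨p, hp, hFp⟩ | ⟨p, q, hp, hq, hpq, hFpq⟩
            · exfalso
              apply hFS
              have hpa : p = 1 := by
                rcases hc0 with h|h
                · rw [hFp, hFa] at h
                  exact Set.mem_singleton_iff.mp (h (Set.mem_singleton p))
                · rw [hFp, hFa] at h
                  exact (Set.mem_singleton_iff.mp (h (Set.mem_singleton 1))).symm
              have : F = F₀ := Subtype.ext (by rw [hFp, hpa, hFa])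
              rw [this]; exact hF₀S
            · rcases hc0 with h|h
              · exfalso
                rw [hFpq, hFa] at h
                have e1 : p = 1 := Set.mem_singleton_iff.mp (h (Or.inl rfl))
                have e2 : q = 1 := Set.mem_singleton_iff.mp (h (Or.inr rfl))
                omega
              · rw [hFa, hFpq] at h
                have h1 : 1 = p ∨ 1 ∈ ({q} : Set ℕ) := h (Set.mem_singleton 1)
                have hp1 : p = 1 := by
                  rcases h1 with h1|h1
                  · exact h1.symm
                  · rw [Set.mem_singleton_iff] at h1
                    rcases memE_cases hE hp with rfl|rfl|rfl|rfl|rfl|rfl <;> omega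
                subst hp1
                show 0 ≤ lc M F + (∑ i ∈ E6, if i ∈ F.1 then t i else 0)
                have e : (∑ i ∈ E6, if i ∈ F.1 then t i else 0) = t 1 + t q := by
                  rw [hFpq]; exact sumE_pair t (by decide) (memE6 hE hq) (by omega)
                rw [e]
                rcases memE_cases hE hq with rfl|rfl|rfl|rfl|rfl|rfl <;>
                  first
                    | omega
                    | (norm_num [lc, hFpq, hts, Set.mem_insert_iff,
                        Set.mem_singleton_iff]; done)
        · -- a = 2
          set t : ℕ → ℝ := fun i => if i = 1 then -1 else if i = 2 then -1 else
            if i = 3 then 1 else if i = 4 then 1 else 0 with hts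
          have ht : ∑ i ∈ E6, t i = 0 := by rw [sumE6_expand]; norm_num [hts]
          refine ⟨fun F => lc M F + ∑ i ∈ E6, if i ∈ F.1 then t i else 0,
            (key_shift hE (lc M) t ht).symm, ?_, ?_⟩
          · intro H hH
            rw [hall H hH]
            show lc M F₀ + (∑ i ∈ E6, if i ∈ F₀.1 then t i else 0) = 0
            have e : (∑ i ∈ E6, if i ∈ F₀.1 then t i else 0) = t 2 := by
              rw [hFa]; exact sumE_single t (by decide)
            rw [e]
            norm_num [lc, hFa, hts]
          · intro F hFS hcomp
            have hc0 := hcomp F₀ hF₀S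
            rcases classify hE hflats F with ⟨p, hp, hFp⟩ | ⟨p, q, hp, hq, hpq, hFpq⟩
            · exfalso
              apply hFS
              have hpa : p = 2 := by
                rcases hc0 with h|h
                · rw [hFp, hFa] at h
                  exact Set.mem_singleton_iff.mp (h (Set.mem_singleton p))
                · rw [hFp, hFa] at h
                  exact (Set.mem_singleton_iff.mp (h (Set.mem_singleton 2))).symm
              have : F = F₀ := Subtype.ext (by rw [hFp, hpa, hFa])
              rw [this]; exact hF₀S
            · rcases hc0 with h|h
              · exfalso
                rw [hFpq, hFa] at h
                have e1 : p = 2 := Set.mem_singleton_iff.mp (h (Or.inl rfl))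
                have e2 : q = 2 := Set.mem_singleton_iff.mp (h (Or.inr rfl))
                omega
              · rw [hFa, hFpq] at h
                have h1 : 2 = p ∨ 2 ∈ ({q} : Set ℕ) := h (Set.mem_singleton 2)
                show 0 ≤ lc M F + (∑ i ∈ E6, if i ∈ F.1 then t i else 0)
                have e : (∑ i ∈ E6, if i ∈ F.1 then t i else 0) = t p + t q := by
                  rw [hFpq]; exact sumE_pair t (memE6 hE hp) (memE6 hE hq) (by omega)
                rw [e]
                have hpq2 : p = 2 ∨ q = 2 := by
                  rcases h1 with h1|h1
                  · exact Or.inl h1.symm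
                  · rw [Set.mem_singleton_iff] at h1; exact Or.inr h1.symm
                rcases memE_cases hE hp with rfl|rfl|rfl|rfl|rfl|rfl <;>
                  rcases memE_cases hE hq with rfl|rfl|rfl|rfl|rfl|rfl <;>
                  first
                    | omega
                    | (norm_num [lc, hFpq, hts, Set.mem_insert_iff,
                        Set.mem_singleton_iff]; done)
      · -- flag is a single pair {a,b}
        have pfa : PFlat M {a} := pflat_single hE hflats ha
        have pfb : PFlat M {b} := pflat_single hE hflats hb
        have pfab : PFlat M ({a,b} : Set ℕ) := pflat_pair hE hflats ha hb (by omega)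
        obtain ⟨t, ht, hta, htb⟩ := shift_two hE ha hb (by omega : a ≠ b)
          (lc M ⟨{b},pfb⟩ - lc M F₀) (-(lc M ⟨{b},pfb⟩))
        refine ⟨fun F => lc M F + ∑ i ∈ E6, if i ∈ F.1 then t i else 0,
          (key_shift hE (lc M) t ht).symm, ?_, ?_⟩
        · intro H hH
          rw [hall H hH]
          show lc M F₀ + (∑ i ∈ E6, if i ∈ F₀.1 then t i else 0) = 0
          have e : (∑ i ∈ E6, if i ∈ F₀.1 then t i else 0) = t a + t b := by
            rw [hFab]; exact sumE_pair t (memE6 hE ha) (memE6 hE hb) (by omega)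
          rw [e, hta, htb]; ring
        · intro F hFS hcomp
          have hc0 := hcomp F₀ hF₀S
          rcases classify hE hflats F with ⟨p, hp, hFp⟩ | ⟨p, q, hp, hq, hpq, hFpq⟩
          · -- singleton insertable: p = a or p = b
            have hpab : p = a ∨ p = b := by
              rcases hc0 with h|h
              · rw [hFp, hFab] at h
                have := h (Set.mem_singleton p)
                rcases this with h'|h'
                · exact Or.inl h'
                · exact Or.inr (Set.mem_singleton_iff.mp h')
              · exfalso
                rw [hFab, hFp] at h
                have e1 : a = p := Set.mem_singleton_iff.mp (h (Or.inl rfl))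
                have e2 : b = p := Set.mem_singleton_iff.mp (h (Or.inr rfl))
                omega
            rcases hpab with rfl|rfl
            · show 0 ≤ lc M F + (∑ i ∈ E6, if i ∈ F.1 then t i else 0)
              have e : (∑ i ∈ E6, if i ∈ F.1 then t i else 0) = t p := by
                rw [hFp]; exact sumE_single t (memE6 hE hp)
              rw [e, hta]
              have e2 : lc M F = lc M ⟨{p},pfa⟩ := lc_congr (by rw [hFp])
              have e3 : lc M F₀ = lc M ⟨{p,b},pfab⟩ := lc_congr (by rw [hFab])
              rw [e2, e3]
              have := pair_ineq hE hflats hp hb hab pfa pfb pfab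
              linarith
            · show 0 ≤ lc M F + (∑ i ∈ E6, if i ∈ F.1 then t i else 0)
              have e : (∑ i ∈ E6, if i ∈ F.1 then t i else 0) = t p := by
                rw [hFp]; exact sumE_single t (memE6 hE hp)
              rw [e, htb]
              have e2 : lc M F = lc M ⟨{p},pfb⟩ := lc_congr (by rw [hFp])
              rw [e2]
              linarith
          · -- pair insertable: equals F₀
            exfalso
            apply hFS
            have hF2 : F.1.ncard = 2 := by rw [hFpq]; exact Set.ncard_pair (by omega)
            have hF02 : F₀.1.ncard = 2 := by rw [hFab]; exact Set.ncard_pair (by omega)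
            have : F = F₀ := by
              rcases hc0 with h|h
              · exact eq_of_subset_card hE hflats F F₀ h (by omega)
              · exact (eq_of_subset_card hE hflats F₀ F h (by omega)).symm
            rw [this]; exact hF₀S
end aux7
/-- In `U_{3,6}` (whose nonempty proper flats are the singletons and 2-element subsets of
`E = {1,…,6}`), the class `ℓ = x₁ + x₂ + 2x₁₂ + x₁₄ + x₂₅ + x₁₆ + x₂₆` satisfies (P3) but not
(P2) for the flag `{1,4}`. -/
theorem stmt18 (M : Matroid ℕ) (hE : M.E = {1, 2, 3, 4, 5, 6})
    (hflats : ∀ F : Set ℕ, PFlat M F ↔ F ⊆ M.E ∧ (F.ncard = 1 ∨ F.ncard = 2))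
    (ℓ : Chow ℝ M)
    (hℓ : ℓ = xv ℝ M {1} + xv ℝ M {2} + 2 • xv ℝ M {1, 2} + xv ℝ M {1, 4}
        + xv ℝ M {2, 5} + xv ℝ M {1, 6} + xv ℝ M {2, 6}) :
    CombNef M ℓ ∧
    ¬ ∃ c : FlatIdx M → ℝ, ℓ = lin ℝ M c ∧
        (∀ F : FlatIdx M, F.1 = {1, 4} → c F = 0) ∧ (∀ F : FlatIdx M, 0 ≤ c F) := by
  haveI : Finite (FlatIdx M) := flatidx_finite hE hflats
  haveI : Fintype (FlatIdx M) := Fintype.ofFinite _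
  have hrep := hlrep hE hflats
  constructor
  · rw [hℓ, ← hrep]
    exact parta hE hflats
  · rintro ⟨c, hc, h14, hpos⟩
    rw [hℓ] at hc
    exact partb hE hflats c h14 hpos hc

end ChowPaper
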